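/- Let q be a prime power, θ a primitive element of F_q, m > 1 a divisor of q−1, and π a (q−1,m)-piecewise affine permutation with parameters (a, b, c). Then the map F : F_q → F_q defined by F(0) = 0 and F(θ^i) = θ^{π(i)} for i ∈ [1,q−1] is a bijection of F_q and agrees with the polynomial (1/m)·∑_{i=1}^{m} θ^{b_i}·x^{a_i}·E_m(x·θ^{−c_i}), where E_m(x) = ∑_{j=0}^{m−1} x^{(q−1)j/m}. -/

import Mathlib

/-- `psi k x` is the representative of `x` mod `k` in `[1, k]`. -/
def psi (k x : ℕ) : ℕ := if x % k = 0 then k else x % k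

/-- `π` is an `(n,m)`-piecewise affine permutation of `[1,n]` with parameters
`(a, b, c)`: it permutes `[1,n]` (and is the identity elsewhere), the entries of
`a, b` lie in `[1,n]`, the entries of `c` form a permutation of `[1,m]`, and for
`x ∈ [1,n]` with `Ψ_m(x) = c_i` one has `π(x) = Ψ_n(a_i x + b_i)` and
`Ψ_m(π(x)) = c_{i+1}`, indices cyclic modulo `m`. -/
def IsPAP (n m : ℕ) [NeZero m] (a b c : Fin m → ℕ) (π : ℕ → ℕ) : Prop :=
  Set.BijOn π (Set.Icc 1 n) (Set.Icc 1 n) ∧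
  (∀ x : ℕ, x ∉ Set.Icc 1 n → π x = x) ∧
  (∀ i, a i ∈ Set.Icc 1 n) ∧ (∀ i, b i ∈ Set.Icc 1 n) ∧
  (∀ i, c i ∈ Set.Icc 1 m) ∧ Function.Injective c ∧
  ∀ x ∈ Set.Icc 1 n, ∀ i, psi m x = c i →
    π x = psi n (a i * x + b i) ∧ psi m (π x) = c (i + 1)

/-!
Every nonzero `x ∈ F_q` is `θ ^ s` for a unique `s ∈ [1, q-1]`, so the lift is a bijection
because `π` is one. For `x = θ ^ s`, the sum `E_m(x θ^{-c_i})` is a geometric sum of powers of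
the `m`-th root of unity `(θ^{s - c_i})^{(q-1)/m}`, hence equals `m` if `s ≡ c_i (mod m)` and
`0` otherwise. Exactly one `i` has `c_i ≡ s`, and for it the summand is
`m θ^{a_i s + b_i} = m θ^{π(s)}`.
-/

open Finset Function Set

theorem psi_modEq (k x : ℕ) : psi k x ≡ x [MOD k] := by
  unfold psi
  split_ifs with h
  · rw [Nat.ModEq, Nat.mod_self, h]
  · exact Nat.mod_modEq x k

theorem psi_mem_Icc {k : ℕ} (hk : 0 < k) (x : ℕ) : psi k x ∈ Set.Icc 1 k := by
  have := Nat.mod_lt x hk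
  unfold psi
  split_ifs <;> simp only [Set.mem_Icc] <;> omega

theorem eq_of_modEq_of_mem_Icc {k a b : ℕ} (ha : a ∈ Set.Icc 1 k) (hb : b ∈ Set.Icc 1 k)
    (h : a ≡ b [MOD k]) : a = b := by
  wlog hab : a ≤ b generalizing a b
  · exact (this hb ha h.symm (by omega)).symm
  simp only [Set.mem_Icc] at ha hb
  have := Nat.eq_zero_of_dvd_of_lt ((Nat.modEq_iff_dvd' hab).1 h) (by omega)
  omega

theorem pow_psi_orderOf {M : Type*} [Monoid M] (x : M) (i : ℕ) :
    x ^ psi (orderOf x) i = x ^ i := by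
  unfold psi
  split_ifs with h
  · rw [pow_orderOf_eq_one, ← pow_mod_orderOf, h, pow_zero]
  · exact pow_mod_orderOf x i

theorem exists_apply_eq_of_injective_of_mem_Icc {m : ℕ} {c : Fin m → ℕ}
    (hc : ∀ i, c i ∈ Set.Icc 1 m) (hinj : Injective c) {y : ℕ} (hy : y ∈ Set.Icc 1 m) :
    ∃ i, c i = y := by
  obtain ⟨i, -, hi⟩ := Finset.surjOn_of_injOn_of_card_le c (s := univ) (t := Finset.Icc 1 m)
    (fun i _ => by simpa using hc i) hinj.injOn (by simp) (by simpa using hy)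
  exact ⟨i, hi⟩

theorem pow_eq_pow_iff_modEq_of_ne_zero {G₀ : Type*} [GroupWithZero G₀] {x : G₀}
    (hx : x ≠ 0) {i j : ℕ} : x ^ i = x ^ j ↔ i ≡ j [MOD orderOf x] := by
  lift x to G₀ˣ using hx.isUnit
  rw [← Units.val_pow_eq_pow_val, ← Units.val_pow_eq_pow_val, Units.val_inj, orderOf_units,
    pow_eq_pow_iff_modEq]

theorem pow_injOn_Icc_orderOf {G₀ : Type*} [GroupWithZero G₀] {x : G₀} (hx : x ≠ 0) :
    InjOn (x ^ ·) (Set.Icc 1 (orderOf x)) := fun _ hi _ hj hij =>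
  eq_of_modEq_of_mem_Icc hi hj ((pow_eq_pow_iff_modEq_of_ne_zero hx).1 hij)

theorem pow_mul_inv_pow_pow_eq_one_iff {G₀ : Type*} [CommGroupWithZero G₀] {θ : G₀}
    (hθ : θ ≠ 0) {m d : ℕ} (hd : d ≠ 0) (hθm : orderOf θ = m * d) {s c : ℕ} :
    (θ ^ s * (θ ^ c)⁻¹) ^ d = 1 ↔ s ≡ c [MOD m] := by
  rw [mul_pow, inv_pow, mul_inv_eq_one₀ (pow_ne_zero _ (pow_ne_zero _ hθ)), ← pow_mul,
    ← pow_mul, pow_eq_pow_iff_modEq_of_ne_zero hθ, hθm, Nat.ModEq.mul_right_cancel_iff' hd]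

theorem sum_range_pow_mul_eq_zero {K : Type*} [Field K] {y : K} {d m : ℕ}
    (hy : y ^ (d * m) = 1) (hy₁ : y ^ d ≠ 1) : ∑ t ∈ range m, y ^ (d * t) = 0 := by
  simp_rw [pow_mul] at hy ⊢
  rw [geom_sum_eq hy₁, hy, sub_self, zero_div]

theorem sum_mul_ite_modEq {K : Type*} [NonAssocSemiring K] {m : ℕ} {c : Fin m → ℕ}
    (hc : ∀ i, c i ∈ Set.Icc 1 m) (hinj : Injective c) {s : ℕ} {i₀ : Fin m}
    (hs : s ≡ c i₀ [MOD m]) (g : Fin m → K) :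
    ∑ i, g i * (if s ≡ c i [MOD m] then (m : K) else 0) = g i₀ * m := by
  have hmod : ∀ i, s ≡ c i [MOD m] ↔ i = i₀ := fun i =>
    ⟨fun h => hinj (eq_of_modEq_of_mem_Icc (hc i) (hc i₀) (h.symm.trans hs)),
      fun h => h ▸ hs⟩
  simp [hmod]

namespace FiniteField

variable {F : Type*} [Field F] [Fintype F]

theorem card_sub_one_ne_zero : Fintype.card F - 1 ≠ 0 :=
  Nat.sub_ne_zero_of_lt Fintype.one_lt_card

theorem natCast_ne_zero_of_dvd_card_sub_one {n : ℕ} (h : n ∣ Fintype.card F - 1) :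
    (n : F) ≠ 0 := by
  intro hn
  obtain ⟨k, hk⟩ := h
  have h0 : ((Fintype.card F - 1 : ℕ) : F) = 0 := by rw [hk, Nat.cast_mul, hn, zero_mul]
  rw [Nat.cast_sub Fintype.card_pos, cast_card_eq_zero, Nat.cast_one, zero_sub, neg_eq_zero]
    at h0
  exact one_ne_zero h0

variable {θ : F} (hθ : orderOf θ = Fintype.card F - 1)
include hθ

theorem ne_zero_of_orderOf_eq_card_sub_one : θ ≠ 0 :=
  (hθ ▸ IsPrimitiveRoot.orderOf θ).ne_zero card_sub_one_ne_zero

theorem exists_mem_Icc_pow_eq {x : F} (hx : x ≠ 0) :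
    ∃ s ∈ Set.Icc 1 (Fintype.card F - 1), θ ^ s = x := by
  have : NeZero (Fintype.card F - 1) := ⟨card_sub_one_ne_zero⟩
  obtain ⟨i, -, hi⟩ := (hθ ▸ IsPrimitiveRoot.orderOf θ).eq_pow_of_pow_eq_one
    (pow_card_sub_one_eq_one x hx)
  refine ⟨psi _ i, psi_mem_Icc (NeZero.pos _) i, ?_⟩
  rw [← hθ, pow_psi_orderOf, hi]

theorem sum_range_pow_mul_inv_pow_eq_ite {m : ℕ} (hm : m ∣ Fintype.card F - 1) (s c : ℕ) :
    ∑ t ∈ range m, (θ ^ s * (θ ^ c)⁻¹) ^ ((Fintype.card F - 1) / m * t) =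
      if s ≡ c [MOD m] then (m : F) else 0 := by
  have hθ0 := ne_zero_of_orderOf_eq_card_sub_one hθ
  obtain ⟨d, hd⟩ := hm
  have hm0 : m ≠ 0 := left_ne_zero_of_mul (hd ▸ card_sub_one_ne_zero)
  have hd0 : d ≠ 0 := right_ne_zero_of_mul (hd ▸ card_sub_one_ne_zero)
  rw [hd, Nat.mul_div_cancel_left d (Nat.pos_of_ne_zero hm0)]
  have hmod := pow_mul_inv_pow_pow_eq_one_iff hθ0 hd0 (hθ.trans hd) (s := s) (c := c)
  split_ifs with h
  · simp [pow_mul, hmod.2 h]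
  · refine sum_range_pow_mul_eq_zero ?_ (mt hmod.1 h)
    rw [mul_comm d m, ← hd]
    exact pow_card_sub_one_eq_one _ (by simp [hθ0])

theorem injective_of_map_pow_eq_pow {π : ℕ → ℕ}
    (hinj : InjOn π (Set.Icc 1 (Fintype.card F - 1)))
    (hmaps : MapsTo π (Set.Icc 1 (Fintype.card F - 1)) (Set.Icc 1 (Fintype.card F - 1)))
    {f : F → F} (hf0 : f 0 = 0)
    (hf : ∀ i ∈ Set.Icc 1 (Fintype.card F - 1), f (θ ^ i) = θ ^ π i) : Injective f := by
  have hθ0 := ne_zero_of_orderOf_eq_card_sub_one hθ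
  have hf_pow : ∀ {x}, x ≠ 0 →
      ∃ s ∈ Set.Icc 1 (Fintype.card F - 1), θ ^ s = x ∧ f x = θ ^ π s :=
    fun hx =>
      let ⟨s, hs, hsx⟩ := exists_mem_Icc_pow_eq hθ hx
      ⟨s, hs, hsx, hsx ▸ hf s hs⟩
  intro x y hxy
  obtain rfl | hx := eq_or_ne x 0 <;> obtain rfl | hy := eq_or_ne y 0
  · rfl
  · obtain ⟨t, -, -, hft⟩ := hf_pow hy
    exact absurd (hft ▸ hf0 ▸ hxy).symm (pow_ne_zero _ hθ0)
  · obtain ⟨s, -, -, hfs⟩ := hf_pow hx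
    exact absurd (hfs ▸ hf0 ▸ hxy) (pow_ne_zero _ hθ0)
  · obtain ⟨s, hs, rfl, hfs⟩ := hf_pow hx
    obtain ⟨t, ht, rfl, hft⟩ := hf_pow hy
    rw [hfs, hft] at hxy
    rw [hinj hs ht (pow_injOn_Icc_orderOf hθ0 (hθ ▸ hmaps hs) (hθ ▸ hmaps ht) hxy)]

end FiniteField

open FiniteField

theorem pap_lift_polynomial_general (q : ℕ)
    (F : Type) [Field F] [Fintype F] (hF : Fintype.card F = q)
    (θ : F) (hθ : orderOf θ = q - 1)
    (m : ℕ) [NeZero m] (hmq : m ∣ q - 1)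
    (a b c : Fin m → ℕ) (π : ℕ → ℕ) (hpap : IsPAP (q - 1) m a b c π)
    (Fmap : F → F) (hF0 : Fmap 0 = 0)
    (hFθ : ∀ i ∈ Set.Icc 1 (q - 1), Fmap (θ ^ i) = θ ^ (π i)) :
    Function.Bijective Fmap ∧
    ∀ x : F, Fmap x =
      (m : F)⁻¹ * ∑ i : Fin m, θ ^ (b i) * x ^ (a i) *
        ∑ t ∈ Finset.range m, (x * (θ ^ (c i))⁻¹) ^ ((q - 1) / m * t) := by
  subst hF
  obtain ⟨hbij, -, ha, -, hc, hcinj, hstep⟩ := hpap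
  refine ⟨Finite.injective_iff_bijective.1
    (injective_of_map_pow_eq_pow hθ hbij.injOn hbij.mapsTo hF0 hFθ), fun x => ?_⟩
  obtain rfl | hx := eq_or_ne x 0
  · have ha0 : ∀ i, a i ≠ 0 := fun i => Nat.pos_iff_ne_zero.1 (ha i).1
    simp [hF0, ha0]
  obtain ⟨s, hs, rfl⟩ := exists_mem_Icc_pow_eq hθ hx
  obtain ⟨i₀, hi₀⟩ :=
    exists_apply_eq_of_injective_of_mem_Icc hc hcinj (psi_mem_Icc (NeZero.pos m) s)
  have hs₀ : s ≡ c i₀ [MOD m] := hi₀ ▸ (psi_modEq m s).symm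
  simp_rw [sum_range_pow_mul_inv_pow_eq_ite hθ hmq, sum_mul_ite_modEq hc hcinj hs₀]
  rw [hFθ s hs, (hstep s hs i₀ hi₀.symm).1, ← hθ, pow_psi_orderOf, mul_comm _ (m : F),
    inv_mul_cancel_left₀ (natCast_ne_zero_of_dvd_card_sub_one hmq), pow_add, pow_mul', mul_comm]

/-- The `θ`-lift of a `(q-1,m)`-p.a.p. `π` (sending `0 ↦ 0` and `θ^i ↦ θ^{π(i)}`)
is a bijection of `F_q` that agrees with the polynomial
`(1/m)·∑_{i=1}^m θ^{b_i} x^{a_i} E_m(x θ^{-c_i})`. -/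
theorem pap_lift_polynomial (q : ℕ) (hq : ∃ p k : ℕ, p.Prime ∧ 0 < k ∧ q = p ^ k)
    (F : Type) [Field F] [Fintype F] (hF : Fintype.card F = q)
    (θ : F) (hθ : orderOf θ = q - 1)
    (m : ℕ) [NeZero m] (hm : 1 < m) (hmq : m ∣ q - 1)
    (a b c : Fin m → ℕ) (π : ℕ → ℕ) (hpap : IsPAP (q - 1) m a b c π)
    (Fmap : F → F) (hF0 : Fmap 0 = 0)
    (hFθ : ∀ i ∈ Set.Icc 1 (q - 1), Fmap (θ ^ i) = θ ^ (π i)) :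
    Function.Bijective Fmap ∧
    ∀ x : F, Fmap x =
      (m : F)⁻¹ * ∑ i : Fin m, θ ^ (b i) * x ^ (a i) *
        ∑ t ∈ Finset.range m, (x * (θ ^ (c i))⁻¹) ^ ((q - 1) / m * t) :=
  pap_lift_polynomial_general q F hF θ hθ m hmq a b c π hpap Fmap hF0 hFθ
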